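/- Let m ≥ 3, let n ≥ 4 be even, and let d with 0 < d < n be coprime to n. Then the Cayley graph Cay(Z_m × Z_n, {±1} × {±d}) can be decomposed into two C_n-factors (i.e., its edge set partitions into two spanning subgraphs, each a disjoint union of cycles of length n). -/

import Mathlib

open SimpleGraph

/-- `H` is a `C_k`-factor: a 2-regular spanning graph all of whose
connected components have exactly `k` vertices (hence are `k`-cycles). -/
def IsCycleFactor {V : Type*} (H : SimpleGraph V) (k : ℕ) : Prop :=
  (∀ v, (H.neighborSet v).ncard = 2) ∧
  (∀ v, (H.connectedComponentMk v).supp.ncard = k)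

/-- `H` is a perfect matching (1-factor): every vertex has exactly one neighbour. -/
def IsOneFactor {V : Type*} (H : SimpleGraph V) : Prop :=
  ∀ v, (H.neighborSet v).ncard = 1

/-- A partition of the edge set of `G` into cycle factors with prescribed cycle lengths. -/
def CycleDecomp {V : Type*} {k : ℕ} (G : SimpleGraph V) (ℓ : Fin k → ℕ) : Prop :=
  ∃ f : Fin k → SimpleGraph V,
    (∀ i, f i ≤ G ∧ IsCycleFactor (f i) (ℓ i)) ∧
    ∀ e ∈ G.edgeSet, ∃! i, e ∈ (f i).edgeSet

/-- A partition of the edge set of `G` into cycle factors with prescribed cycle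
lengths together with one perfect matching. -/
def CycleDecompPM {V : Type*} {k : ℕ} (G : SimpleGraph V) (ℓ : Fin k → ℕ) : Prop :=
  ∃ (f : Fin k → SimpleGraph V) (M : SimpleGraph V),
    (∀ i, f i ≤ G ∧ IsCycleFactor (f i) (ℓ i)) ∧ M ≤ G ∧ IsOneFactor M ∧
    ∀ e ∈ G.edgeSet,
      ((∃! i, e ∈ (f i).edgeSet) ∧ e ∉ M.edgeSet) ∨
      ((∀ i, e ∉ (f i).edgeSet) ∧ e ∈ M.edgeSet)

/-- The Cayley graph on `ZMod m × ZMod n` with connection set `S`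
(symmetrised, loops removed). -/
def cay (m n : ℕ) (S : Set (ZMod m × ZMod n)) : SimpleGraph (ZMod m × ZMod n) :=
  SimpleGraph.fromRel (fun x y => x - y ∈ S)


/-!
Write `u` for `d` as a unit of `ℤ_n` and `χ : ℤ_n → ℤ_2` for reduction mod 2 (`n` is even).
For `ε = ±1` the bijection `(a, j) ↦ (a + ε χ(j), j u)` of `ℤ_m × ℤ_n` carries the rows
`{a} × ℤ_n`, each an `n`-cycle under `j ~ j + 1`, onto `n`-cycles zigzagging between the rows
`a` and `a + ε`: since `u` is odd, `χ(j u) = χ(j)`, so consecutive vertices differ by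
`(ε (-1)^χ(x₂), u)`. At every vertex `x` the factors for `ε = 1` and `ε = -1` take the two
forward steps `x + (±1, u)`, so they are disjoint (as `2 ≠ 0` in `ℤ_m` and `2u ≠ 0` in `ℤ_n`)
and together they cover every edge of the Cayley graph.
-/

theorem IsCycleFactor.of_iso {V W : Type*} {G : SimpleGraph V} {G' : SimpleGraph W} {k : ℕ}
    (φ : G ≃g G') (hG : IsCycleFactor G k) : IsCycleFactor G' k := by
  refine ⟨fun w => ?_, fun w => ?_⟩
  · rw [← φ.apply_symm_apply w, ← Nat.card_coe_set_eq, ← Nat.card_congr (φ.mapNeighborSet _),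
      Nat.card_coe_set_eq, hG.1]
  · rw [← φ.apply_symm_apply w, ← Nat.card_coe_set_eq]
    exact (Nat.card_congr
      (ConnectedComponent.isoEquivSupp φ (G.connectedComponentMk (φ.symm w)))).symm.trans (hG.2 _)

theorem cycleDecomp_of_sup_eq_of_disjoint {V : Type*} {G F₁ F₂ : SimpleGraph V} {k : ℕ}
    (h₁ : IsCycleFactor F₁ k) (h₂ : IsCycleFactor F₂ k) (hsup : F₁ ⊔ F₂ = G)
    (hdisj : Disjoint F₁ F₂) : CycleDecomp G (fun _ : Fin 2 => k) := by
  refine ⟨![F₁, F₂], fun i => ?_, fun e he => ?_⟩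
  · subst hsup
    fin_cases i
    exacts [⟨le_sup_left, h₁⟩, ⟨le_sup_right, h₂⟩]
  · have hdisj' := Set.disjoint_left.mp (disjoint_edgeSet.mpr hdisj)
    rw [← hsup, edgeSet_sup] at he
    rcases he with he | he
    · exact ⟨0, he, fun j hj => by fin_cases j; rfl; exact absurd hj (hdisj' he)⟩
    · exact ⟨1, he, fun j hj => by fin_cases j; exact absurd he (hdisj' hj); rfl⟩

theorem ZMod.natCast_ne_zero_of_lt {k n : ℕ} (hk : 0 < k) (hkn : k < n) : (k : ZMod n) ≠ 0 :=
  fun h => absurd (Nat.le_of_dvd hk ((ZMod.natCast_eq_zero_iff k n).mp h)) (by omega)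

def rowCycles (α : Type*) (n : ℕ) : SimpleGraph (α × ZMod n) :=
  fromRel fun p q => q = (p.1, p.2 + 1)

section rowCycles

variable {α : Type*} {n : ℕ}

theorem rowCycles_adj_iff (h1 : (1 : ZMod n) ≠ 0) {p q : α × ZMod n} :
    (rowCycles α n).Adj p q ↔ q = (p.1, p.2 + 1) ∨ q = (p.1, p.2 - 1) := by
  have hp : p ≠ (p.1, p.2 + 1) := fun h => h1 (by simpa using congrArg Prod.snd h)
  have hp' : p ≠ (p.1, p.2 - 1) := fun h =>
    h1 (by linear_combination (congrArg Prod.snd h : p.2 = p.2 - 1))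
  have hq : p = (q.1, q.2 + 1) ↔ q = (p.1, p.2 - 1) := by
    constructor <;> rintro rfl <;> simp
  rw [rowCycles, fromRel_adj, hq]
  constructor
  · exact fun h => h.2
  · rintro (rfl | rfl)
    exacts [⟨hp, .inl rfl⟩, ⟨hp', .inr rfl⟩]

theorem ncard_neighborSet_rowCycles (h1 : (1 : ZMod n) ≠ 0) (h2 : (2 : ZMod n) ≠ 0)
    (p : α × ZMod n) : ((rowCycles α n).neighborSet p).ncard = 2 := by
  have hnbr : (rowCycles α n).neighborSet p = {(p.1, p.2 + 1), (p.1, p.2 - 1)} := by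
    ext q
    simp [rowCycles_adj_iff h1]
  rw [hnbr, Set.ncard_pair]
  intro h
  exact h2 (by linear_combination congrArg Prod.snd h)

theorem rowCycles_reachable_iff [NeZero n] (h1 : (1 : ZMod n) ≠ 0) {p q : α × ZMod n} :
    (rowCycles α n).Reachable p q ↔ p.1 = q.1 := by
  constructor
  · rintro ⟨w⟩
    induction w with
    | nil => rfl
    | cons hadj _ ih =>
      rcases (rowCycles_adj_iff h1).mp hadj with rfl | rfl <;> exact ih
  · intro hpq
    have hstep : ∀ k : ℕ, (rowCycles α n).Reachable p (p.1, p.2 + k) := by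
      intro k
      induction k with
      | zero => simp
      | succ k ih =>
        refine ih.trans (Adj.reachable ((rowCycles_adj_iff h1).mpr (.inl ?_)))
        simp [add_assoc]
    simpa [hpq] using hstep (q.2 - p.2).val

theorem ncard_supp_rowCycles [NeZero n] (h1 : (1 : ZMod n) ≠ 0) (p : α × ZMod n) :
    ((rowCycles α n).connectedComponentMk p).supp.ncard = n := by
  have hsupp : ((rowCycles α n).connectedComponentMk p).supp = Set.range (Prod.mk p.1) := by
    ext q
    simp only [ConnectedComponent.mem_supp_iff, ConnectedComponent.eq,
      rowCycles_reachable_iff h1, Set.mem_range]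
    exact ⟨fun h => ⟨q.2, by rw [← h]⟩, by rintro ⟨b, rfl⟩; rfl⟩
  rw [hsupp, ← Set.image_univ, Set.ncard_image_of_injective _ (Prod.mk_right_injective p.1),
    Set.ncard_univ, Nat.card_zmod]

theorem isCycleFactor_rowCycles (hn : 3 ≤ n) : IsCycleFactor (rowCycles α n) n := by
  have : NeZero n := ⟨by omega⟩
  have h1 : (1 : ZMod n) ≠ 0 := by
    exact_mod_cast ZMod.natCast_ne_zero_of_lt (k := 1) one_pos (by omega)
  have h2 : (2 : ZMod n) ≠ 0 := by
    exact_mod_cast ZMod.natCast_ne_zero_of_lt (k := 2) two_pos (by omega)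
  exact ⟨ncard_neighborSet_rowCycles h1 h2, ncard_supp_rowCycles h1⟩

end rowCycles

theorem zmodTwo_eq_one_of_isUnit {t : ZMod 2} (ht : IsUnit t) : t = 1 := by
  obtain rfl | rfl : t = 0 ∨ t = 1 := by revert t; decide
  exacts [absurd ht not_isUnit_zero, rfl]

theorem zmodTwo_natCast_val_add_one {R : Type*} [Ring R] (t : ZMod 2) :
    (((t + 1).val : ℕ) : R) = t.val + (-1) ^ t.val := by
  obtain rfl | rfl : t = 0 ∨ t = 1 := by revert t; decide
  · rw [zero_add, ZMod.val_zero, ZMod.val_one]; simp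
  · rw [show (1 + 1 : ZMod 2) = 0 from rfl, ZMod.val_one, ZMod.val_zero]; simp

section zigzag

variable {R : Type*} [Ring R] {n : ℕ} (χ : ZMod n →+* ZMod 2) (ε : R) (u : (ZMod n)ˣ)

def zigzagEquiv : R × ZMod n ≃ R × ZMod n where
  toFun p := (p.1 + ε * (χ p.2).val, p.2 * u)
  invFun q := (q.1 - ε * (χ (q.2 * ↑u⁻¹)).val, q.2 * ↑u⁻¹)
  left_inv p := by simp
  right_inv q := by simp

def zigzagFactor : SimpleGraph (R × ZMod n) :=
  fromRel fun x y => y = x + (ε * (-1) ^ (χ x.2).val, (u : ZMod n))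

theorem zigzagEquiv_succ (p : R × ZMod n) :
    zigzagEquiv χ ε u (p.1, p.2 + 1) =
      zigzagEquiv χ ε u p + (ε * (-1) ^ (χ (zigzagEquiv χ ε u p).2).val, (u : ZMod n)) := by
  have hχu : χ u = 1 := zmodTwo_eq_one_of_isUnit (u.isUnit.map χ)
  simp only [zigzagEquiv, Equiv.coe_fn_mk, Prod.mk_add_mk, map_add, map_one, map_mul, hχu,
    mul_one, zmodTwo_natCast_val_add_one, add_mul, one_mul, mul_add, add_assoc]

def zigzagIso : rowCycles R n ≃g zigzagFactor χ ε u where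
  toEquiv := zigzagEquiv χ ε u
  map_rel_iff' {p q} := by
    simp only [zigzagFactor, rowCycles, fromRel_adj, ne_eq,
      (zigzagEquiv χ ε u).apply_eq_iff_eq, ← zigzagEquiv_succ]

theorem isCycleFactor_zigzagFactor (hn : 3 ≤ n) : IsCycleFactor (zigzagFactor χ ε u) n :=
  (isCycleFactor_rowCycles hn).of_iso (zigzagIso χ ε u)

end zigzag

theorem disjoint_zigzagFactor_neg {R : Type*} [CommRing R] {n : ℕ} (χ : ZMod n →+* ZMod 2)
    (u : (ZMod n)ˣ) (h2R : (2 : R) ≠ 0) (h2n : (2 : ZMod n) ≠ 0) :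
    Disjoint (zigzagFactor χ (1 : R) u) (zigzagFactor χ (-1) u) := by
  have hu : (u : ZMod n) * ↑u⁻¹ = 1 := u.mul_inv
  have hsign : ∀ k : ℕ, 1 * (-1 : R) ^ k ≠ -1 * (-1) ^ k := fun k h => by
    rcases neg_one_pow_eq_or R k with hk | hk <;> rw [hk] at h
    exacts [h2R (by linear_combination h), h2R (by linear_combination -h)]
  rw [disjoint_left]
  rintro x y ⟨-, h₁⟩ ⟨-, h₂⟩
  simp only [Prod.ext_iff, Prod.fst_add, Prod.snd_add] at h₁ h₂
  rcases h₁ with ⟨h₁, h₁'⟩ | ⟨h₁, h₁'⟩ <;> rcases h₂ with ⟨h₂, h₂'⟩ | ⟨h₂, h₂'⟩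
  · exact hsign _ (by linear_combination h₂ - h₁)
  · exact h2n (by linear_combination -(h₁' + h₂') * ↑u⁻¹ - 2 * hu)
  · exact h2n (by linear_combination -(h₁' + h₂') * ↑u⁻¹ - 2 * hu)
  · exact hsign _ (by linear_combination h₂ - h₁)

theorem mem_signs_iff {α β : Type*} [Neg α] [Neg β] {a : α} {b : β} {p : α × β} :
    p ∈ ({(a, b), (a, -b), (-a, b), (-a, -b)} : Set (α × β)) ↔
      (p.1 = a ∨ p.1 = -a) ∧ (p.2 = b ∨ p.2 = -b) := by
  simp only [Set.mem_insert_iff, Set.mem_singleton_iff, Prod.ext_iff]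
  tauto

section cay

variable {m n : ℕ} (χ : ZMod n →+* ZMod 2) (u : (ZMod n)ˣ)

theorem zigzagFactor_le_cay {ε : ZMod m} (hε : ε = 1 ∨ ε = -1) :
    zigzagFactor χ ε u ≤ cay m n {((1 : ZMod m), (u : ZMod n)), (1, -(u : ZMod n)),
      (-1, (u : ZMod n)), (-1, -(u : ZMod n))} := by
  have hstep : ∀ k : ℕ, ε * (-1) ^ k = 1 ∨ ε * (-1) ^ k = -1 := fun k => by
    rcases hε with rfl | rfl <;> rcases neg_one_pow_eq_or (ZMod m) k with hk | hk <;> simp [hk]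
  rintro x y ⟨hne, hxy⟩
  refine ⟨hne, ?_⟩
  rcases hxy with rfl | rfl
  · exact .inr (mem_signs_iff.mpr ⟨by simpa using hstep _, by simp⟩)
  · exact .inl (mem_signs_iff.mpr ⟨by simpa using hstep _, by simp⟩)

theorem cay_le_sup_zigzagFactor :
    cay m n {((1 : ZMod m), (u : ZMod n)), (1, -(u : ZMod n)), (-1, (u : ZMod n)),
      (-1, -(u : ZMod n))} ≤ zigzagFactor χ 1 u ⊔ zigzagFactor χ (-1) u := by
  have hstep : ∀ x y : ZMod m × ZMod n, x ≠ y → y.1 - x.1 = 1 ∨ y.1 - x.1 = -1 →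
      y.2 = x.2 + u → (zigzagFactor χ 1 u ⊔ zigzagFactor χ (-1) u).Adj x y := by
    intro x y hne h₁ h₂
    have hadj : ∀ ε : ZMod m, y.1 = x.1 + ε * (-1) ^ (χ x.2).val →
        (zigzagFactor χ ε u).Adj x y := fun ε h => ⟨hne, .inl (Prod.ext h h₂)⟩
    rcases h₁ with h₁ | h₁ <;> rcases neg_one_pow_eq_or (ZMod m) (χ x.2).val with hk | hk <;>
      rw [hk] at hadj
    · exact .inl (hadj 1 (by linear_combination h₁))
    · exact .inr (hadj (-1) (by linear_combination h₁))
    · exact .inr (hadj (-1) (by linear_combination h₁))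
    · exact .inl (hadj 1 (by linear_combination h₁))
  have hswap : ∀ a b : ZMod m, a - b = 1 ∨ a - b = -1 → b - a = 1 ∨ b - a = -1 := by
    rintro a b (h | h)
    exacts [.inr (by linear_combination -h), .inl (by linear_combination -h)]
  rintro x y ⟨hne, hxy⟩
  rcases hxy with h | h <;> obtain ⟨h₁, h₂ | h₂⟩ := mem_signs_iff.mp h <;>
    simp only [Prod.fst_sub, Prod.snd_sub] at h₁ h₂
  · exact (hstep y x hne.symm h₁ (by linear_combination h₂)).symm
  · exact hstep x y hne (hswap _ _ h₁) (by linear_combination -h₂)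
  · exact hstep x y hne h₁ (by linear_combination h₂)
  · exact (hstep y x hne.symm (hswap _ _ h₁) (by linear_combination -h₂)).symm

end cay

theorem stmt_0 (m n d : ℕ) (hm : 3 ≤ m) (hn : 4 ≤ n) (hne : Even n)
    (hcop : Nat.Coprime d n) :
    CycleDecomp
      (cay m n ({((1 : ZMod m), (d : ZMod n)), (1, -(d : ZMod n)),
        (-1, (d : ZMod n)), (-1, -(d : ZMod n))} : Set (ZMod m × ZMod n)))
      (fun _ : Fin 2 => n) := by
  let u := ZMod.unitOfCoprime d hcop
  let χ := ZMod.castHom hne.two_dvd (ZMod 2)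
  have h2m : (2 : ZMod m) ≠ 0 := by
    exact_mod_cast ZMod.natCast_ne_zero_of_lt (k := 2) two_pos (by omega)
  have h2n : (2 : ZMod n) ≠ 0 := by
    exact_mod_cast ZMod.natCast_ne_zero_of_lt (k := 2) two_pos (by omega)
  rw [← ZMod.coe_unitOfCoprime d hcop]
  refine cycleDecomp_of_sup_eq_of_disjoint (isCycleFactor_zigzagFactor χ 1 u (by omega))
    (isCycleFactor_zigzagFactor χ (-1) u (by omega)) ?_ (disjoint_zigzagFactor_neg χ u h2m h2n)
  exact le_antisymm
    (sup_le (zigzagFactor_le_cay χ u (.inl rfl)) (zigzagFactor_le_cay χ u (.inr rfl)))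
    (cay_le_sup_zigzagFactor χ u)
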